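/- Suppose X has a Lebesgue density f_X supported on [0,1]. Then for every integer k ≥ 1, the k-th moment of Z satisfies τ_k = E(Z^k) = 1 − (k/√2) · ∫₀¹ (f_X(x)/√(1−x)) · G_k(x) dx, and the integral on the right-hand side is finite. -/

import Mathlib

/-!
Write `Z = z(X, T)` with `z(x, t) = 2x - 1 + 2(1 - x) t²`. By independence and Fubini,
`E Zᵏ = ∫ f_X(x) ∫₀¹ z(x, s)ᵏ ds dx`, the inner uniform average being over an even integrand.
For fixed `x`, integrating `d/ds (s zᵏ)` gives `∫₀¹ zᵏ ds = 1 - 4k(1 - x) ∫₀¹ s² zᵏ⁻¹ ds`, and the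
substitution `t = z(x, s)`, under which `1 + t - 2x = 2(1 - x) s²`, turns `G_k(x)` into
`4 √2 (1 - x)^{3/2} ∫₀¹ s² zᵏ⁻¹ ds`. As `|z| ≤ 1` on `[0, 1] × [-1, 1]`, this also bounds
`G_k(x) / √(1 - x)` by `4 √2`, whence the integrability.
-/

open MeasureTheory
open scoped ENNReal

/-- `G_k(x) = ∫_{2x-1}^{1} t^{k-1} √(1 + t - 2x) dt` for `k ≥ 1` (and `G₀ ≡ 0`). -/
noncomputable def G : ℕ → ℝ → ℝ
  | 0, _ => 0
  | (k + 1), x => ∫ t in (2 * x - 1)..1, t ^ k * Real.sqrt (1 + t - 2 * x)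

open Set intervalIntegral ProbabilityTheory

section Probability

variable {α : Type*} [MeasurableSpace α] {μ : Measure α} {f : α → ℝ}

theorem integral_withDensity_ofReal (hf : Measurable f) (hf0 : ∀ x, 0 ≤ f x) (g : α → ℝ) :
    ∫ x, g x ∂μ.withDensity (fun x => ENNReal.ofReal (f x)) = ∫ x, f x * g x ∂μ := by
  rw [integral_withDensity_eq_integral_toReal_smul (by fun_prop)
    (.of_forall fun _ => ENNReal.ofReal_lt_top)]
  simp only [ENNReal.toReal_ofReal (hf0 _), smul_eq_mul]

theorem integrable_and_integral_eq_one_of_isProbabilityMeasure_withDensity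
    (hf : Measurable f) (hf0 : ∀ x, 0 ≤ f x)
    [IsProbabilityMeasure (μ.withDensity fun x => ENNReal.ofReal (f x))] :
    Integrable f μ ∧ ∫ x, f x ∂μ = 1 := by
  have hone : ∫⁻ x, ENNReal.ofReal (f x) ∂μ = 1 := by
    have h := measure_univ (μ := μ.withDensity fun x => ENNReal.ofReal (f x))
    rwa [withDensity_apply _ MeasurableSet.univ, setLIntegral_univ] at h
  have hint : Integrable f μ :=
    (lintegral_ofReal_ne_top_iff_integrable hf.aestronglyMeasurable (.of_forall hf0)).mp
      (by simp [hone])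
  refine ⟨hint, ?_⟩
  rw [integral_eq_lintegral_of_nonneg_ae (.of_forall hf0) hf.aestronglyMeasurable, hone,
    ENNReal.toReal_one]

variable {Ω β E : Type*} [MeasurableSpace Ω] [MeasurableSpace β] [NormedAddCommGroup E]
  [NormedSpace ℝ E] {P : Measure Ω} [IsFiniteMeasure P] {ν : Measure β} [SFinite μ] [SFinite ν]

theorem ProbabilityTheory.IndepFun.integral_comp_prodMk {X : Ω → α} {Y : Ω → β}
    (hXY : IndepFun X Y P) (hX : HasLaw X μ P) (hY : HasLaw Y ν P) {φ : α × β → E}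
    (hφ : Integrable φ (μ.prod ν)) :
    ∫ ω, φ (X ω, Y ω) ∂P = ∫ x, ∫ y, φ (x, y) ∂ν ∂μ := by
  rw [← integral_prod φ hφ]
  exact (hXY.hasLaw_prod hX hY).integral_comp hφ.aestronglyMeasurable

end Probability

theorem integral_uniform_Icc_of_even {E : Type*} [NormedAddCommGroup E] [NormedSpace ℝ E]
    {f : ℝ → E} (hf : IntervalIntegrable f volume (-1) 1) (heven : ∀ t, f (-t) = f t) :
    ∫ t, f t ∂((2 : ℝ≥0∞)⁻¹ • volume.restrict (Icc (-1 : ℝ) 1)) = ∫ t in (0 : ℝ)..1, f t := by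
  have hsymm : ∫ t in (-1 : ℝ)..0, f t = ∫ t in (0 : ℝ)..1, f t := by
    simpa [heven] using (integral_comp_neg (a := (0 : ℝ)) (b := 1) (f := f)).symm
  rw [MeasureTheory.integral_smul_measure, integral_Icc_eq_integral_Ioc,
    ← integral_of_le (by norm_num), ← integral_add_adjacent_intervals (b := 0)
      (hf.mono_set (by simp [Icc_subset_Icc])) (hf.mono_set (by simp [Icc_subset_Icc])),
    hsymm, ← two_smul ℝ, smul_smul]
  norm_num

theorem integral_eq_intervalIntegral_of_forall_notMem_Icc {E : Type*} [NormedAddCommGroup E]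
    [NormedSpace ℝ E] {f : ℝ → E} {a b : ℝ} (hab : a ≤ b) (hf : ∀ x ∉ Icc a b, f x = 0) :
    ∫ x, f x = ∫ x in a..b, f x := by
  rw [integral_of_le hab, ← integral_Icc_eq_integral_Ioc,
    setIntegral_eq_integral_of_forall_compl_eq_zero hf]

section Moments

def zMap (x t : ℝ) : ℝ := t ^ 2 + (1 - t ^ 2) * (2 * x - 1)

variable (x : ℝ) (m : ℕ)

theorem zMap_eq (t : ℝ) : zMap x t = 2 * x - 1 + 2 * (1 - x) * t ^ 2 := by
  unfold zMap; ring

theorem zMap_one : zMap x 1 = 1 := by simp [zMap]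

theorem zMap_neg (t : ℝ) : zMap x (-t) = zMap x t := by simp [zMap]

@[fun_prop]
theorem Continuous.zMap {α : Type*} [TopologicalSpace α] {f g : α → ℝ} (hf : Continuous f)
    (hg : Continuous g) : Continuous fun a => _root_.zMap (f a) (g a) := by
  unfold _root_.zMap; fun_prop

theorem hasDerivAt_zMap (t : ℝ) : HasDerivAt (zMap x) (4 * (1 - x) * t) t := by
  rw [show zMap x = fun t => 2 * x - 1 + 2 * (1 - x) * t ^ 2 from funext (zMap_eq x)]
  exact (((hasDerivAt_pow 2 t).const_mul (2 * (1 - x))).const_add (2 * x - 1)).congr_deriv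
    (by ring)

theorem abs_zMap_le_one {x t : ℝ} (hx : x ∈ Icc 0 1) (ht : t ∈ Icc (-1) 1) : |zMap x t| ≤ 1 := by
  obtain ⟨hx0, hx1⟩ := hx
  have ht2 : t ^ 2 ≤ 1 := by nlinarith [ht.1, ht.2]
  rw [zMap_eq, abs_le]
  constructor <;> nlinarith [sq_nonneg t]

theorem integral_zMap_pow_succ_add :
    (∫ s in (0 : ℝ)..1, zMap x s ^ (m + 1))
      + 4 * (1 - x) * (m + 1) * ∫ s in (0 : ℝ)..1, s ^ 2 * zMap x s ^ m = 1 := by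
  have hderiv : ∀ s ∈ uIcc (0 : ℝ) 1, HasDerivAt (fun s => s * zMap x s ^ (m + 1))
      (zMap x s ^ (m + 1) + 4 * (1 - x) * (m + 1) * (s ^ 2 * zMap x s ^ m)) s := by
    intro s _
    exact ((hasDerivAt_id' s).fun_mul ((hasDerivAt_zMap x s).fun_pow (m + 1))).congr_deriv
      (by push_cast; ring)
  have hint :=
    integral_eq_sub_of_hasDerivAt hderiv (Continuous.intervalIntegrable (by fun_prop) _ _)
  rw [integral_add (Continuous.intervalIntegrable (by fun_prop) _ _)
    (Continuous.intervalIntegrable (by fun_prop) _ _), intervalIntegral.integral_const_mul] at hint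
  simpa [zMap_one] using hint

theorem continuous_G_succ : Continuous (G (m + 1)) := by
  have h : Continuous fun x : ℝ => ∫ t in (1 : ℝ)..(2 * x - 1), t ^ m * √(1 + t - 2 * x) :=
    continuous_parametric_intervalIntegral_of_continuous (by fun_prop) (by fun_prop)
  convert h.neg using 1
  funext x
  rw [Pi.neg_apply, ← integral_symm]
  rfl

variable {x}

theorem G_succ_eq (hx : x ≤ 1) :
    G (m + 1) x = 4 * (1 - x) * √(2 * (1 - x)) * ∫ s in (0 : ℝ)..1, s ^ 2 * zMap x s ^ m := by
  have hsub := integral_deriv_smul_comp (a := 0) (b := 1) (fun s _ => hasDerivAt_zMap x s)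
    (by fun_prop : Continuous fun s => 4 * (1 - x) * s).continuousOn
    (g := fun t => t ^ m * √(1 + t - 2 * x)) (by fun_prop)
  rw [zMap_one, show zMap x 0 = 2 * x - 1 by simp [zMap]] at hsub
  rw [G, ← hsub, ← intervalIntegral.integral_const_mul]
  refine integral_congr fun s hs => ?_
  have hs0 : 0 ≤ s := by rw [uIcc_of_le zero_le_one] at hs; exact hs.1
  have hrad : 1 + zMap x s - 2 * x = 2 * (1 - x) * s ^ 2 := by rw [zMap_eq]; ring
  simp only [smul_eq_mul, Function.comp_apply, hrad,
    Real.sqrt_mul (by linarith : (0 : ℝ) ≤ 2 * (1 - x)), Real.sqrt_sq hs0]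
  ring

theorem G_succ_div_sqrt (hx : x ≤ 1) :
    G (m + 1) x / √(1 - x) = 4 * √2 * (1 - x) * ∫ s in (0 : ℝ)..1, s ^ 2 * zMap x s ^ m := by
  rw [G_succ_eq m hx, Real.sqrt_mul zero_le_two]
  rcases hx.lt_or_eq with hlt | rfl
  · field_simp [(Real.sqrt_pos.2 (sub_pos.2 hlt)).ne']
  · simp

theorem integral_zMap_pow_succ (hx : x ≤ 1) :
    ∫ s in (0 : ℝ)..1, zMap x s ^ (m + 1)
      = 1 - ((m + 1 : ℕ) : ℝ) / √2 * (G (m + 1) x / √(1 - x)) := by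
  have hcoef : ((m + 1 : ℕ) : ℝ) / √2 * (4 * √2 * (1 - x)) = 4 * (1 - x) * (m + 1) := by
    push_cast; field_simp
  rw [G_succ_div_sqrt m hx, ← mul_assoc, hcoef]
  linarith [integral_zMap_pow_succ_add x m]

theorem abs_G_succ_div_sqrt_le (hx : x ∈ Icc 0 1) : |G (m + 1) x / √(1 - x)| ≤ 4 * √2 := by
  have hI : |∫ s in (0 : ℝ)..1, s ^ 2 * zMap x s ^ m| ≤ 1 := by
    have hbound : ∀ s ∈ uIoc (0 : ℝ) 1, ‖s ^ 2 * zMap x s ^ m‖ ≤ 1 := by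
      intro s hs
      rw [uIoc_of_le zero_le_one] at hs
      have hs' : s ∈ Icc (-1) 1 := ⟨by linarith [hs.1], hs.2⟩
      rw [norm_mul, norm_pow, norm_pow]
      exact mul_le_one₀ (pow_le_one₀ (norm_nonneg _) (abs_le.2 hs')) (by positivity)
        (pow_le_one₀ (norm_nonneg _) (abs_zMap_le_one hx hs'))
    simpa using norm_integral_le_of_norm_le_const hbound
  rw [G_succ_div_sqrt m hx.2, abs_mul,
    abs_of_nonneg (mul_nonneg (by positivity) (sub_nonneg.2 hx.2))]
  calc 4 * √2 * (1 - x) * |∫ s in (0 : ℝ)..1, s ^ 2 * zMap x s ^ m| ≤ 4 * √2 * 1 * 1 := by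
        gcongr; linarith [hx.1]
    _ = 4 * √2 := by ring

theorem integral_uniform_zMap_pow (n : ℕ) :
    ∫ t, zMap x t ^ n ∂((2 : ℝ≥0∞)⁻¹ • volume.restrict (Icc (-1 : ℝ) 1))
      = ∫ s in (0 : ℝ)..1, zMap x s ^ n :=
  integral_uniform_Icc_of_even ((by fun_prop : Continuous _).intervalIntegrable _ _)
    fun t => by rw [zMap_neg]

theorem mul_integral_zMap_pow_succ {f : ℝ → ℝ} (hf_supp : ∀ x ∉ Icc 0 1, f x = 0) :
    f x * ∫ s in (0 : ℝ)..1, zMap x s ^ (m + 1)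
      = f x - ((m + 1 : ℕ) : ℝ) / √2 * (f x / √(1 - x) * G (m + 1) x) := by
  by_cases hx : x ∈ Icc 0 1
  · rw [integral_zMap_pow_succ m hx.2]; ring
  · simp [hf_supp x hx]

end Moments

theorem integrable_zMap_pow_prod {μ ν : Measure ℝ} [IsFiniteMeasure μ] [IsFiniteMeasure ν]
    (hμ : ∀ᵐ x ∂μ, x ∈ Icc 0 1) (hν : ∀ᵐ t ∂ν, t ∈ Icc (-1) 1) (n : ℕ) :
    Integrable (fun p : ℝ × ℝ => zMap p.1 p.2 ^ n) (μ.prod ν) := by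
  refine .of_bound (by fun_prop : Continuous _).aestronglyMeasurable 1 ?_
  filter_upwards [Measure.quasiMeasurePreserving_fst.ae hμ,
    Measure.quasiMeasurePreserving_snd.ae hν] with p hx ht
  rw [norm_pow]
  exact pow_le_one₀ (norm_nonneg _) (abs_zMap_le_one hx ht)

theorem integrable_mul_G_succ_div_sqrt {f : ℝ → ℝ} (hf : Integrable f)
    (hf_supp : ∀ x ∉ Icc 0 1, f x = 0) (m : ℕ) :
    Integrable fun x => f x / √(1 - x) * G (m + 1) x := by
  refine (hf.norm.const_mul (4 * √2)).mono'
    ((hf.1.div₀ (by fun_prop : Continuous fun x : ℝ => √(1 - x)).aestronglyMeasurable).mul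
      (continuous_G_succ m).aestronglyMeasurable) (.of_forall fun x => ?_)
  by_cases hx : x ∈ Icc 0 1
  · rw [show f x / √(1 - x) * G (m + 1) x = f x * (G (m + 1) x / √(1 - x)) by ring, norm_mul,
      mul_comm]
    exact mul_le_mul_of_nonneg_right (abs_G_succ_div_sqrt_le m hx) (norm_nonneg _)
  · simp [hf_supp x hx]

theorem moments_tau_k
    {Ω : Type*} [MeasurableSpace Ω] (P : Measure Ω) [IsProbabilityMeasure P]
    (X T : Ω → ℝ) (hX : Measurable X) (hT : Measurable T)
    (hX_range : ∀ ω, X ω ∈ Set.Icc (0 : ℝ) 1)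
    (hT_unif : Measure.map T P = (2 : ℝ≥0∞)⁻¹ • volume.restrict (Set.Icc (-1 : ℝ) 1))
    (hindep : ProbabilityTheory.IndepFun X T P)
    (fX : ℝ → ℝ) (hfX_meas : Measurable fX) (hfX_nonneg : ∀ x, 0 ≤ fX x)
    (hfX_supp : ∀ x, x ∉ Set.Icc (0 : ℝ) 1 → fX x = 0)
    (hX_law : Measure.map X P = volume.withDensity fun x => ENNReal.ofReal (fX x))
    (k : ℕ) (hk : 1 ≤ k) :
    IntervalIntegrable (fun x => fX x / Real.sqrt (1 - x) * G k x) volume 0 1 ∧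
      ∫ ω, (T ω ^ 2 + (1 - T ω ^ 2) * (2 * X ω - 1)) ^ k ∂P
        = 1 - (k : ℝ) / Real.sqrt 2 *
            ∫ x in (0 : ℝ)..1, fX x / Real.sqrt (1 - x) * G k x := by
  obtain ⟨m, rfl⟩ : ∃ m, k = m + 1 := ⟨k - 1, by omega⟩
  set μX := volume.withDensity fun x => ENNReal.ofReal (fX x)
  set ν := (2 : ℝ≥0∞)⁻¹ • volume.restrict (Icc (-1 : ℝ) 1)
  have hXlaw : HasLaw X μX P := ⟨hX.aemeasurable, hX_law⟩
  have hTlaw : HasLaw T ν P := ⟨hT.aemeasurable, hT_unif⟩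
  have := hXlaw.isProbabilityMeasure_iff.1 ‹_›
  have := hTlaw.isProbabilityMeasure_iff.1 ‹_›
  obtain ⟨hfX_int, hfX_one⟩ :=
    integrable_and_integral_eq_one_of_isProbabilityMeasure_withDensity (μ := volume) hfX_meas
      hfX_nonneg
  have hD := integrable_mul_G_succ_div_sqrt hfX_int hfX_supp m
  have hXae : ∀ᵐ x ∂μX, x ∈ Icc (0 : ℝ) 1 :=
    hX_law ▸ (ae_map_iff hX.aemeasurable measurableSet_Icc).2 (.of_forall hX_range)
  have hTae : ∀ᵐ t ∂ν, t ∈ Icc (-1 : ℝ) 1 :=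
    Measure.ae_smul_measure (ae_restrict_mem measurableSet_Icc) _
  refine ⟨hD.intervalIntegrable, ?_⟩
  calc _ = ∫ x, ∫ t, zMap x t ^ (m + 1) ∂ν ∂μX :=
        hindep.integral_comp_prodMk hXlaw hTlaw (integrable_zMap_pow_prod hXae hTae _)
    _ = ∫ x, fX x * ∫ s in (0 : ℝ)..1, zMap x s ^ (m + 1) := by
        simp_rw [ν, integral_uniform_zMap_pow]
        exact integral_withDensity_ofReal hfX_meas hfX_nonneg _
    _ = _ := by
        simp_rw [mul_integral_zMap_pow_succ m hfX_supp]
        rw [integral_sub hfX_int (hD.const_mul _), MeasureTheory.integral_const_mul, hfX_one,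
          integral_eq_intervalIntegral_of_forall_notMem_Icc zero_le_one
            fun x hx => by simp [hfX_supp x hx]]
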